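/- arXiv:1207.6160 — 8 statements merged into one kernel-verified Lean document; each statement's English description precedes it below -/
import Mathlib

section
/- Let A be an associative algebra over a field k, q ∈ A an idempotent, and k₀ ∈ k a fixed scalar. On the subalgebra (A,q) = {x ∈ A : qxq = qx}, the bracket [x,y] := xy - yx - xyq + yxq + k₀·xqy - k₀·yqx satisfies the Jacobi identity: [[x,y],z] + [[y,z],x] + [[z,x],y] = 0 for all x,y,z ∈ (A,q). -/
/-- The 6-th square bracket on an invariant algebra. -/
def bracket6 {k A : Type*} [Field k] [Ring A] [Algebra k A] (q : A) (k₀ : k) (x y : A) : A :=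
  x * y - y * x - x * y * q + y * x * q + k₀ • (x * q * y) - k₀ • (y * q * x)

/-- The bracket `[x,y] = xy - yx - xyq + yxq + k₀·xqy - k₀·yqx` satisfies the Jacobi
identity on the invariant algebra `(A,q) = {x | qxq = qx}`. -/
theorem bracket6_jacobi {k A : Type*} [Field k] [Ring A] [Algebra k A]
    (q : A) (hq : q * q = q) (k₀ : k) (x y z : A)
    (hx : q * x * q = q * x) (hy : q * y * q = q * y) (hz : q * z * q = q * z) :
    bracket6 q k₀ (bracket6 q k₀ x y) z + bracket6 q k₀ (bracket6 q k₀ y z) x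
      + bracket6 q k₀ (bracket6 q k₀ z x) y = 0 := by
  have hx' : ∀ t : A, q * (x * (q * t)) = q * (x * t) := fun t => by
    rw [← mul_assoc, ← mul_assoc, hx, mul_assoc]
  have hy' : ∀ t : A, q * (y * (q * t)) = q * (y * t) := fun t => by
    rw [← mul_assoc, ← mul_assoc, hy, mul_assoc]
  have hz' : ∀ t : A, q * (z * (q * t)) = q * (z * t) := fun t => by
    rw [← mul_assoc, ← mul_assoc, hz, mul_assoc]
  have hq' : ∀ t : A, q * (q * t) = q * t := fun t => by rw [← mul_assoc, hq]
  have hx2 : q * (x * q) = q * x := by rw [← mul_assoc, hx]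
  have hy2 : q * (y * q) = q * y := by rw [← mul_assoc, hy]
  have hz2 : q * (z * q) = q * z := by rw [← mul_assoc, hz]
  simp only [bracket6, mul_sub, sub_mul, mul_add, add_mul, smul_mul_assoc,
    mul_smul_comm, smul_sub, smul_add, smul_smul, mul_assoc, hx', hy', hz', hq',
    hx2, hy2, hz2, hq]
  abel
end

section
/- The bracket [x,y] := xy - yx - xyq + yxq + k₀·xqy - k₀·yqx on (A,q) is bilinear and alternating, hence together with the Jacobi identity makes (A,q) into a Lie algebra over k. -/
/-- The bracket `[x,y] = xy - yx - xyq + yxq + k₀·xqy - k₀·yqx` is bilinear and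
alternating, and satisfies the Jacobi identity on `(A,q) = {x | qxq = qx}`,
hence makes `(A,q)` into a Lie algebra over `k`. -/
theorem bracket6_lie_algebra {k A : Type*} [Field k] [Ring A] [Algebra k A]
    (q : A) (hq : q * q = q) (k₀ : k) :
    (∀ x y z : A, bracket6 q k₀ (x + y) z = bracket6 q k₀ x z + bracket6 q k₀ y z) ∧
    (∀ x y z : A, bracket6 q k₀ x (y + z) = bracket6 q k₀ x y + bracket6 q k₀ x z) ∧
    (∀ (c : k) (x y : A), bracket6 q k₀ (c • x) y = c • bracket6 q k₀ x y) ∧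
    (∀ (c : k) (x y : A), bracket6 q k₀ x (c • y) = c • bracket6 q k₀ x y) ∧
    (∀ x : A, bracket6 q k₀ x x = 0) ∧
    (∀ x y z : A, q * x * q = q * x → q * y * q = q * y → q * z * q = q * z →
      bracket6 q k₀ (bracket6 q k₀ x y) z + bracket6 q k₀ (bracket6 q k₀ y z) x
        + bracket6 q k₀ (bracket6 q k₀ z x) y = 0) := by
  refine ⟨?_, ?_, ?_, ?_, ?_, ?_⟩
  · intro x y z
    simp only [bracket6, add_mul, mul_add, smul_add]
    abel
  · intro x y z
    simp only [bracket6, add_mul, mul_add, smul_add]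
    abel
  · intro c x y
    simp only [bracket6, smul_mul_assoc, mul_smul_comm, smul_sub, smul_add, smul_smul,
      mul_comm c k₀]
  · intro c x y
    simp only [bracket6, smul_mul_assoc, mul_smul_comm, smul_sub, smul_add, smul_smul,
      mul_comm c k₀]
  · intro x
    simp [bracket6]
  · intro x y z hx hy hz
    have hq2 : ∀ a : A, q * (q * a) = q * a := fun a => by
      rw [← mul_assoc, hq]
    have hx1 : q * (x * q) = q * x := by rw [← mul_assoc, hx]
    have hy1 : q * (y * q) = q * y := by rw [← mul_assoc, hy]
    have hz1 : q * (z * q) = q * z := by rw [← mul_assoc, hz]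
    have hx2 : ∀ a : A, q * (x * (q * a)) = q * (x * a) := fun a => by
      rw [← mul_assoc, ← mul_assoc, hx, mul_assoc]
    have hy2 : ∀ a : A, q * (y * (q * a)) = q * (y * a) := fun a => by
      rw [← mul_assoc, ← mul_assoc, hy, mul_assoc]
    have hz2 : ∀ a : A, q * (z * (q * a)) = q * (z * a) := fun a => by
      rw [← mul_assoc, ← mul_assoc, hz, mul_assoc]
    simp only [bracket6, sub_mul, mul_sub, add_mul, mul_add, smul_mul_assoc, mul_smul_comm,
      smul_sub, smul_add, smul_smul, mul_assoc, hq, hq2, hx1, hy1, hz1, hx2, hy2, hz2]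
    abel
end

section
/- Let V be a vector space, W a subspace, and q ∈ End(V) with q(W) = 0 and (q-I)(V) ⊆ W. Then the invariant algebra (End(V), q) = {f ∈ End(V) : qfq = qf} equals the set of all linear endomorphisms f of V with f(W) ⊆ W. -/
/-- For a `W`-idempotent `q`, the invariant algebra `(End(V), q) = {f | qfq = qf}`
equals the set of endomorphisms preserving `W`. -/
theorem invariant_algebra_eq_preserving {k V : Type*} [Field k] [AddCommGroup V] [Module k V]
    [FiniteDimensional k V] (W : Submodule k V) (q : Module.End k V)
    (hqW : ∀ w ∈ W, q w = 0) (hqI : ∀ v : V, q v - v ∈ W) :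
    {f : Module.End k V | q * f * q = q * f} = {f : Module.End k V | ∀ w ∈ W, f w ∈ W} := by
  ext f
  simp only [Set.mem_setOf_eq]
  constructor
  · intro h w hw
    have h1 : q (f (q w)) = q (f w) := congrArg (fun g : Module.End k V => g w) h
    rw [hqW w hw, map_zero, map_zero] at h1
    have := hqI (f w)
    rw [← h1, zero_sub] at this
    simpa using W.neg_mem this
  · intro h
    ext v
    show q (f (q v)) = q (f v)
    have h1 : f (q v - v) ∈ W := h _ (hqI v)
    have h2 : q (f (q v - v)) = 0 := hqW _ h1
    rw [map_sub, map_sub, sub_eq_zero] at h2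
    exact h2
end

section
/- Let φ: L → (End(V), q) be a Lie algebra homomorphism into the 6-th general linear Lie algebra (with bracket [f,g] = fg - gf - fgq + gfq + k₀fqg - k₀gqf, where q is a W-idempotent). Then the map f defined by f(x) = φ(x) + k₀·qφ(x) - φ(x)q is an ordinary representation of L on V, i.e., f([x,y]) = f(x)f(y) - f(y)f(x) for all x, y ∈ L. -/
/-- If `φ : L → (End(V), q)` is a representation⁶ (a Lie algebra homomorphism into the
6-th general linear Lie algebra induced by a `W`-idempotent `q`), then
`f(x) = φ(x) + k₀·qφ(x) - φ(x)q` is an ordinary representation of `L` on `V`. -/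
theorem rep6_first_ordinary_rep {k V L : Type*} [Field k] [AddCommGroup V] [Module k V]
    [FiniteDimensional k V] [LieRing L] [LieAlgebra k L]
    (W : Submodule k V) (q : Module.End k V)
    (hqW : ∀ w ∈ W, q w = 0) (hqI : ∀ v : V, q v - v ∈ W)
    (k₀ : k) (φ : L →ₗ[k] Module.End k V)
    (hinv : ∀ x : L, q * φ x * q = q * φ x)
    (hhom : ∀ x y : L, φ ⁅x, y⁆ =
      φ x * φ y - φ y * φ x - φ x * φ y * q + φ y * φ x * q
        + k₀ • (φ x * q * φ y) - k₀ • (φ y * q * φ x)) :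
    ∀ x y : L,
      φ ⁅x, y⁆ + k₀ • (q * φ ⁅x, y⁆) - φ ⁅x, y⁆ * q
        = (φ x + k₀ • (q * φ x) - φ x * q) * (φ y + k₀ • (q * φ y) - φ y * q)
          - (φ y + k₀ • (q * φ y) - φ y * q) * (φ x + k₀ • (q * φ x) - φ x * q) := by
  have hq2 : q * q = q := by
    ext v
    have h := hqW _ (hqI v)
    simp only [map_sub] at h
    have : q (q v) - q v = 0 := h
    simpa [sub_eq_zero] using this
  have h1 : ∀ x : L, q * (φ x * q) = q * φ x := fun x => by
    rw [← mul_assoc]; exact hinv x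
  have h1' : ∀ (x : L) (t : Module.End k V), q * (φ x * (q * t)) = q * (φ x * t) := by
    intro x t
    rw [← mul_assoc, ← mul_assoc, hinv x, mul_assoc]
  have hq2' : ∀ t : Module.End k V, q * (q * t) = q * t := by
    intro t; rw [← mul_assoc, hq2]
  intro x y
  rw [hhom]
  simp only [mul_sub, sub_mul, mul_add, add_mul, smul_mul_assoc, mul_smul_comm, smul_sub,
    smul_add, smul_smul, mul_assoc, h1, h1', hq2', hq2]
  module
end

section
/- With the hypotheses as before, the map g defined by g(x) = k₀·φ(x)∘q is an ordinary representation of L on V: g([x,y]) = g(x)g(y) - g(y)g(x) for all x,y ∈ L. -/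
/-- If `φ : L → (End(V), q)` is a representation⁶, then `g(x) = k₀·φ(x)∘q` is an
ordinary representation of `L` on `V`. -/
theorem rep6_second_ordinary_rep {k V L : Type*} [Field k] [AddCommGroup V] [Module k V]
    [FiniteDimensional k V] [LieRing L] [LieAlgebra k L]
    (W : Submodule k V) (q : Module.End k V)
    (hqW : ∀ w ∈ W, q w = 0) (hqI : ∀ v : V, q v - v ∈ W)
    (k₀ : k) (φ : L →ₗ[k] Module.End k V)
    (hinv : ∀ x : L, q * φ x * q = q * φ x)
    (hhom : ∀ x y : L, φ ⁅x, y⁆ =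
      φ x * φ y - φ y * φ x - φ x * φ y * q + φ y * φ x * q
        + k₀ • (φ x * q * φ y) - k₀ • (φ y * q * φ x)) :
    ∀ x y : L,
      k₀ • (φ ⁅x, y⁆ * q)
        = (k₀ • (φ x * q)) * (k₀ • (φ y * q)) - (k₀ • (φ y * q)) * (k₀ • (φ x * q)) := by
  have hq2 : q * q = q := by
    apply LinearMap.ext
    intro v
    have h := hqW (q v - v) (hqI v)
    rw [map_sub, sub_eq_zero] at h
    simpa [Module.End.mul_apply] using h
  intro x y
  rw [hhom x y]
  simp only [sub_mul, add_mul, smul_mul_assoc, mul_smul_comm, mul_assoc, hq2, smul_smul, smul_add, smul_zero, zero_add,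
    smul_sub]
  abel
end

section
/- The set of lower triangular block matrices { [[A,0],[B,C]] : A ∈ Mₙ(k), B ∈ M_{m,n}(k), C ∈ Mₘ(k) } is closed under the bracket [X,Y]₆ = XY - YX - XYQ + YXQ + k₀XQY - k₀YQX, where Q = [[Iₙ,0],[T,0]] for a fixed T ∈ M_{m,n}(k), and the bracket is given blockwise by: the (1,1)-block of [X,Y]₆ equals k₀[A_X,A_Y], the (2,2)-block equals [C_X,C_Y], and the (2,1)-block equals k₀B_XA_Y - k₀B_YA_X + k₀C_XTA_Y - k₀C_YTA_X - C_XC_YT + C_YC_XT. -/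
open Matrix

/-- The lower triangular block matrices are closed under the 6-th bracket
`[X,Y]₆ = XY - YX - XYQ + YXQ + k₀XQY - k₀YQX` with `Q = [[I,0],[T,0]]`, and the
bracket is given blockwise as stated. -/
theorem block_bracket6_formula {k : Type*} [Field k] {n m : ℕ} (hn : 0 < n) (hm : 0 < m)
    (T : Matrix (Fin m) (Fin n) k) (k₀ : k)
    (Ax Ay : Matrix (Fin n) (Fin n) k) (Bx By : Matrix (Fin m) (Fin n) k)
    (Cx Cy : Matrix (Fin m) (Fin m) k) :
    (fromBlocks Ax 0 Bx Cx) * (fromBlocks Ay 0 By Cy)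
      - (fromBlocks Ay 0 By Cy) * (fromBlocks Ax 0 Bx Cx)
      - (fromBlocks Ax 0 Bx Cx) * (fromBlocks Ay 0 By Cy) * (fromBlocks 1 0 T 0)
      + (fromBlocks Ay 0 By Cy) * (fromBlocks Ax 0 Bx Cx) * (fromBlocks 1 0 T 0)
      + k₀ • ((fromBlocks Ax 0 Bx Cx) * (fromBlocks 1 0 T 0) * (fromBlocks Ay 0 By Cy))
      - k₀ • ((fromBlocks Ay 0 By Cy) * (fromBlocks 1 0 T 0) * (fromBlocks Ax 0 Bx Cx))
    = fromBlocks (k₀ • (Ax * Ay - Ay * Ax)) 0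
        (k₀ • (Bx * Ay) - k₀ • (By * Ax) + k₀ • (Cx * T * Ay) - k₀ • (Cy * T * Ax)
          - Cx * Cy * T + Cy * Cx * T)
        (Cx * Cy - Cy * Cx) := by
  simp only [sub_eq_add_neg, fromBlocks_multiply, fromBlocks_smul, fromBlocks_neg,
    fromBlocks_add]
  simp only [Matrix.mul_zero, Matrix.zero_mul, Matrix.mul_one, Matrix.one_mul,
      smul_sub, smul_add, add_mul, smul_zero, smul_neg, neg_zero, add_zero, zero_add,
      neg_add_rev, neg_neg, Matrix.mul_assoc]
  rw [fromBlocks_inj]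
  refine ⟨?_, rfl, ?_, ?_⟩ <;> try simp only [Matrix.add_mul, smul_add, Matrix.mul_assoc]
  all_goals abel
end

section
/- In the free invariant algebra Â = T(V)/I generated by X, the set Ŝ consisting of 1̂, q̂, the monomials x̂_{j₁}···x̂_{jₘ} (m ≥ 1), and the monomials x̂_{j₁}···x̂_{jₜ}·q̂·x̂_{j_{t+1}}···x̂_{jₘ} (m ≥ 1, 0 ≤ t ≤ m) forms a k-basis of Â as a vector space. -/
noncomputable section

variable (k : Type) [Field k] (J : Type)

/-- The generator `q̃` of the tensor algebra `T(V)`, `V = (⊕_j k·xⱼ) ⊕ k·q̃`. -/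
def qTilde : TensorAlgebra k (Option J →₀ k) :=
  TensorAlgebra.ι k (Finsupp.single none 1)

/-- The generators `xⱼ` of the tensor algebra. -/
def xTilde (j : J) : TensorAlgebra k (Option J →₀ k) :=
  TensorAlgebra.ι k (Finsupp.single (some j) 1)

/-- The relations generating the ideal `I`: `q̃⊗q̃ - q̃` and `q̃⊗a⊗q̃ - q̃⊗a`. -/
inductive FreeInvRel : TensorAlgebra k (Option J →₀ k) → TensorAlgebra k (Option J →₀ k) → Prop
  | idem : FreeInvRel (qTilde k J * qTilde k J) (qTilde k J)
  | inv (a : TensorAlgebra k (Option J →₀ k)) :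
      FreeInvRel (qTilde k J * a * qTilde k J) (qTilde k J * a)

/-- A monomial index: either a word `x̂_{j₁}···x̂_{jₘ}` (the empty word giving `1̂`), or a
pair of words with one `q̂` inserted in between, `x̂_{j₁}···x̂_{jₜ}·q̂·x̂_{j_{t+1}}···x̂_{jₘ}`
(the empty pair giving `q̂`). -/
def monoVal : List J ⊕ (List J × List J) → RingQuot (FreeInvRel k J)
  | .inl w => (w.map fun j => RingQuot.mkAlgHom k (FreeInvRel k J) (xTilde k J j)).prod
  | .inr (w₁, w₂) =>
      (w₁.map fun j => RingQuot.mkAlgHom k (FreeInvRel k J) (xTilde k J j)).prod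
        * RingQuot.mkAlgHom k (FreeInvRel k J) (qTilde k J)
        * (w₂.map fun j => RingQuot.mkAlgHom k (FreeInvRel k J) (xTilde k J j)).prod


/-!
The normal forms `w` and `u·q̂·v` (with `u`, `v`, `w` words in the `x̂ⱼ`) form a monoid `M` under
concatenation followed by deleting every `q̂` after the first, and in `M` one has `q·m·q = q·m`.
Hence `T(V) → k[M]`, `xⱼ ↦ [xⱼ]`, `q̃ ↦ [q]`, kills `I` and descends to `Â`; conversely
`m ↦ m̂` is multiplicative `M → Â` because `q̂·a·q̂ = q̂·a` holds in `Â`, so it extends to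
`k[M] → Â`. The two algebra maps are mutually inverse (check on generators), so `Â ≅ k[M]` and
the standard basis of `k[M]` is carried to `Ŝ`.
-/

/-- Normal forms of the monomials of `Â`: `inl w` is a word in the `x̂ⱼ`, `inr (u, v)` is `u·q̂·v`.
A product containing two `q̂`s is normalised by `q̂·a·q̂ = q̂·a`, which deletes the second one. -/
abbrev FreeInvMonoid : Type := List J ⊕ (List J × List J)

namespace FreeInvMonoid

variable {J}

instance : Mul (FreeInvMonoid J) where
  mul
    | .inl w, .inl w' => .inl (w ++ w')
    | .inl w, .inr (u, v) => .inr (w ++ u, v)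
    | .inr (u, v), .inl w => .inr (u, v ++ w)
    | .inr (u, v), .inr (u', v') => .inr (u, v ++ u' ++ v')

@[simp] lemma inl_mul_inl (w w' : List J) :
    (.inl w * .inl w' : FreeInvMonoid J) = .inl (w ++ w') := rfl

@[simp] lemma inl_mul_inr (w u v : List J) :
    (.inl w * .inr (u, v) : FreeInvMonoid J) = .inr (w ++ u, v) := rfl

@[simp] lemma inr_mul_inl (u v w : List J) :
    (.inr (u, v) * .inl w : FreeInvMonoid J) = .inr (u, v ++ w) := rfl

@[simp] lemma inr_mul_inr (u v u' v' : List J) :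
    (.inr (u, v) * .inr (u', v') : FreeInvMonoid J) = .inr (u, v ++ u' ++ v') := rfl

instance : Monoid (FreeInvMonoid J) where
  one := .inl []
  mul_assoc x y z := by
    rcases x with _ | ⟨_, _⟩ <;> rcases y with _ | ⟨_, _⟩ <;> rcases z with _ | ⟨_, _⟩ <;> simp
  one_mul x := by rcases x with _ | ⟨_, _⟩ <;> rfl
  mul_one x := by rcases x with _ | ⟨_, _⟩ <;> simp [HMul.hMul, Mul.mul]

def q : FreeInvMonoid J := .inr ([], [])

lemma q_mul_mul_q (m : FreeInvMonoid J) : q * m * q = q * m := by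
  rcases m with _ | ⟨_, _⟩ <;> simp [q]

def gen : Option J → FreeInvMonoid J
  | none => q
  | some j => .inl [j]

end FreeInvMonoid

theorem MonoidAlgebra.single_mul_mul_single_of_mul_mul_eq {R M : Type*} [Semiring R] [Monoid M]
    {e : M} (he : ∀ m, e * m * e = e * m) (x : MonoidAlgebra R M) :
    single e 1 * x * single e 1 = single e 1 * x := by
  induction x using MonoidAlgebra.induction_linear with
  | zero => simp
  | add x y hx hy => rw [mul_add, add_mul, hx, hy]
  | single m r => simp [single_mul_single, he]

section Quotient

variable {k J}

def qHat : RingQuot (FreeInvRel k J) := RingQuot.mkAlgHom k (FreeInvRel k J) (qTilde k J)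

def xHat (j : J) : RingQuot (FreeInvRel k J) := RingQuot.mkAlgHom k (FreeInvRel k J) (xTilde k J j)

def wordHat (w : List J) : RingQuot (FreeInvRel k J) := (w.map xHat).prod

lemma monoVal_inl (w : List J) : monoVal k J (.inl w) = wordHat w := rfl

lemma monoVal_inr (u v : List J) :
    monoVal k J (.inr (u, v)) = wordHat u * qHat * wordHat v := rfl

lemma wordHat_append (w w' : List J) :
    (wordHat (w ++ w') : RingQuot (FreeInvRel k J)) = wordHat w * wordHat w' := by
  simp [wordHat]

lemma qHat_mul_mul_qHat (a : RingQuot (FreeInvRel k J)) : qHat * a * qHat = qHat * a := by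
  obtain ⟨a, rfl⟩ := RingQuot.mkAlgHom_surjective k (FreeInvRel k J) a
  simpa only [qHat, map_mul] using RingQuot.mkAlgHom_rel k (FreeInvRel.inv a)

lemma monoVal_gen (o : Option J) :
    monoVal k J (FreeInvMonoid.gen o) =
      RingQuot.mkAlgHom k _ (TensorAlgebra.ι k (Finsupp.single o 1)) := by
  rcases o with _ | j
  · simp [FreeInvMonoid.gen, FreeInvMonoid.q, monoVal_inr, wordHat, qHat, qTilde]
  · simp [FreeInvMonoid.gen, monoVal_inl, wordHat, xHat, xTilde]

variable (k J)

def monoValHom : FreeInvMonoid J →* RingQuot (FreeInvRel k J) where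
  toFun := monoVal k J
  map_one' := rfl
  map_mul'
    | .inl w, .inl w' => wordHat_append w w'
    | .inl w, .inr (u, v) => by
        simp only [FreeInvMonoid.inl_mul_inr, monoVal_inl, monoVal_inr, wordHat_append, mul_assoc]
    | .inr (u, v), .inl w => by
        simp only [FreeInvMonoid.inr_mul_inl, monoVal_inl, monoVal_inr, wordHat_append, mul_assoc]
    | .inr (u, v), .inr (u', v') => by
        simp only [FreeInvMonoid.inr_mul_inr, monoVal_inr, wordHat_append]
        calc _ = wordHat u * (qHat * (wordHat v * wordHat u')) * wordHat v' := by
                simp only [mul_assoc]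
          _ = wordHat u * (qHat * (wordHat v * wordHat u') * qHat) * wordHat v' := by
                rw [qHat_mul_mul_qHat]
          _ = _ := by simp only [mul_assoc]

end Quotient

section Normalization

open MonoidAlgebra FreeInvMonoid

def genLin : (Option J →₀ k) →ₗ[k] MonoidAlgebra k (FreeInvMonoid J) :=
  Finsupp.linearCombination k fun o => single (gen o) 1

lemma lift_genLin_ι_single (o : Option J) :
    TensorAlgebra.lift k (genLin k J) (TensorAlgebra.ι k (Finsupp.single o 1)) =
      single (gen o) 1 := by
  simp [genLin]

def toMonoidAlgebra : RingQuot (FreeInvRel k J) →ₐ[k] MonoidAlgebra k (FreeInvMonoid J) :=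
  RingQuot.liftAlgHom k ⟨TensorAlgebra.lift k (genLin k J), fun a b h => by
    have hq : TensorAlgebra.lift k (genLin k J) (qTilde k J) = single q 1 :=
      lift_genLin_ι_single k J none
    induction h with
    | idem =>
      simpa [hq] using single_mul_mul_single_of_mul_mul_eq q_mul_mul_q (1 : MonoidAlgebra k _)
    | inv a => simpa only [map_mul, hq] using single_mul_mul_single_of_mul_mul_eq q_mul_mul_q _⟩

def ofMonoidAlgebra : MonoidAlgebra k (FreeInvMonoid J) →ₐ[k] RingQuot (FreeInvRel k J) :=
  MonoidAlgebra.lift k _ _ (monoValHom k J)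

variable {k J}

lemma toMonoidAlgebra_mk_ι_single (o : Option J) :
    toMonoidAlgebra k J (RingQuot.mkAlgHom k _ (TensorAlgebra.ι k (Finsupp.single o 1)))
      = single (gen o) 1 := by
  rw [toMonoidAlgebra, RingQuot.liftAlgHom_mkAlgHom_apply, lift_genLin_ι_single]

lemma toMonoidAlgebra_wordHat (w : List J) :
    toMonoidAlgebra k J (wordHat w) = single (.inl w) 1 := by
  induction w with
  | nil => exact map_one _
  | cons j w ih =>
    rw [wordHat, List.map_cons, List.prod_cons, map_mul, ← wordHat, ih, xHat, xTilde,
      toMonoidAlgebra_mk_ι_single, single_mul_single, one_mul, gen, inl_mul_inl,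
      List.singleton_append]

lemma toMonoidAlgebra_monoVal (m : FreeInvMonoid J) :
    toMonoidAlgebra k J (monoVal k J m) = single m 1 := by
  rcases m with w | ⟨u, v⟩
  · exact toMonoidAlgebra_wordHat w
  · rw [monoVal_inr, map_mul, map_mul, toMonoidAlgebra_wordHat, toMonoidAlgebra_wordHat, qHat,
      qTilde, toMonoidAlgebra_mk_ι_single, single_mul_single, single_mul_single]
    simp [gen, q]

lemma ofMonoidAlgebra_single_one (m : FreeInvMonoid J) :
    ofMonoidAlgebra k J (single m 1) = monoVal k J m := by
  rw [ofMonoidAlgebra, lift_single, one_smul]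
  rfl

variable (k J)

def freeInvEquiv : RingQuot (FreeInvRel k J) ≃ₐ[k] MonoidAlgebra k (FreeInvMonoid J) :=
  AlgEquiv.ofAlgHom (toMonoidAlgebra k J) (ofMonoidAlgebra k J)
    (MonoidAlgebra.algHom_ext (fun m => by
        simp only [AlgHom.comp_apply, ofMonoidAlgebra_single_one, toMonoidAlgebra_monoVal,
          AlgHom.id_apply])
      (Subsingleton.elim _ _))
    (by
      ext o
      simp only [LinearMap.comp_apply, AlgHom.toLinearMap_apply, AlgHom.comp_apply,
        Finsupp.lsingle_apply, toMonoidAlgebra_mk_ι_single, ofMonoidAlgebra_single_one,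
        monoVal_gen, AlgHom.id_apply])

end Normalization

/-- The monomials `1̂`, `q̂`, `x̂_{j₁}···x̂_{jₘ}`, and
`x̂_{j₁}···x̂_{jₜ}·q̂·x̂_{j_{t+1}}···x̂_{jₘ}` form a `k`-basis of the free invariant
algebra `Â = T(V)/I`. -/
theorem free_invariant_algebra_basis :
    ∃ b : Module.Basis (List J ⊕ (List J × List J)) k (RingQuot (FreeInvRel k J)),
      ∀ i, b i = monoVal k J i :=
  ⟨(MonoidAlgebra.basis (FreeInvMonoid J) k).map (freeInvEquiv k J).symm.toLinearEquiv,
    fun i => ofMonoidAlgebra_single_one i⟩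
end
end

section
/- In an invariant algebra (A,q), the map σ(a) := a + qa - aq is an algebra homomorphism: σ(ab) = σ(a)σ(b) for all a,b ∈ A, σ(1) = 1, and σ(q) = q. -/
/-- In an invariant algebra `(A,q)`, the map `σ(a) = a + qa - aq` is an algebra
homomorphism: `σ(ab) = σ(a)σ(b)`, `σ(1) = 1`, and `σ(q) = q`. -/
theorem sigma_is_invariant_homomorphism {k A : Type*} [Field k] [Ring A] [Algebra k A]
    (q : A) (hq : q * q = q) (hinv : ∀ a : A, q * a * q = q * a) :
    (∀ a b : A, (a * b + q * (a * b) - (a * b) * q)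
        = (a + q * a - a * q) * (b + q * b - b * q)) ∧
    ((1 : A) + q * 1 - 1 * q = 1) ∧
    (q + q * q - q * q = q) := by
  refine ⟨fun a b => ?_, by simp, by simp⟩
  have h1 : q * a * q * b = q * a * b := by rw [hinv]
  have h2 : a * q * q * b = a * q * b := by rw [mul_assoc a q q, hq]
  have h3 : q * a * b * q = q * a * b := by
    rw [mul_assoc q a b, hinv, ← mul_assoc]
  have h4 : a * q * b * q = a * q * b := by
    rw [mul_assoc (a*q) b q, mul_assoc a q (b*q), ← mul_assoc q b q, hinv, ← mul_assoc]
  simp only [mul_sub, sub_mul, mul_add, add_mul, ← mul_assoc, h1, h2, h3, h4]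
  abel
end
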